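/- arXiv:2207.05952 — 2 statements merged into one kernel-verified Lean document; each statement's English description precedes it below -/
import Mathlib

section
/- Under dropout applied to the last hidden layer, the expectation over the dropout noise of the mean squared error equals the noise-free mean squared error plus the regularizer R₁(θ) = ((1-p)/(2np)) ∑_{i=1}^n ∑_{j=1}^{m} (W_j f_j(x_i))², where W_j f_j(x_i) is the contribution of hidden neuron j to the output on sample x_i. -/
/-!
Write the dropout output on sample `i` as `Cᵢ + ∑ⱼ xᵢⱼ ηⱼ`, where `Cᵢ` is the noise-free residual
and `xᵢⱼ = Wⱼ fⱼ(xᵢ)`. The noise is centred, so the expected square is `Cᵢ² + Var(∑ⱼ xᵢⱼ ηⱼ)`,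
and by independence this variance is `∑ⱼ xᵢⱼ² Var ηⱼ = (1 - p) / p · ∑ⱼ xᵢⱼ²`.
-/

open MeasureTheory ProbabilityTheory

def HasTwoPointLaw {Ω : Type*} [MeasurableSpace Ω] (μ : Measure Ω) (X : Ω → ℝ) (a c p : ℝ) :
    Prop :=
  μ {ω | X ω = a} = ENNReal.ofReal p ∧ μ {ω | X ω = c} = ENNReal.ofReal (1 - p)

namespace HasTwoPointLaw

variable {Ω : Type*} [MeasurableSpace Ω] {μ : Measure Ω} [IsProbabilityMeasure μ]
  {X : Ω → ℝ} {a c p : ℝ}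

theorem ae_eq_or_eq (h : HasTwoPointLaw μ X a c p) (hX : Measurable X) (hac : a ≠ c)
    (hp0 : 0 ≤ p) (hp1 : p ≤ 1) : ∀ᵐ ω ∂μ, X ω = a ∨ X ω = c := by
  have hmeas : MeasurableSet {ω | X ω = a ∨ X ω = c} :=
    (hX (measurableSet_singleton a)).union (hX (measurableSet_singleton c))
  have hdisj : Disjoint {ω | X ω = a} {ω | X ω = c} :=
    Set.disjoint_left.2 fun ω ha hc => hac (ha.symm.trans hc)
  refine ae_iff.2 ?_
  rw [← Set.compl_ofPred, prob_compl_eq_zero_iff hmeas, Set.ofPred_or,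
    measure_union hdisj (hX (measurableSet_singleton c)), h.1, h.2,
    ← ENNReal.ofReal_add hp0 (by linarith), add_sub_cancel, ENNReal.ofReal_one]

theorem integral_comp (h : HasTwoPointLaw μ X a c p) (hX : Measurable X) (hac : a ≠ c)
    (hp0 : 0 ≤ p) (hp1 : p ≤ 1) (g : ℝ → ℝ) :
    ∫ ω, g (X ω) ∂μ = p * g a + (1 - p) * g c := by
  have hA : MeasurableSet {ω | X ω = a} := hX (measurableSet_singleton a)
  have hC : MeasurableSet {ω | X ω = c} := hX (measurableSet_singleton c)
  have hsplit : (fun ω => g (X ω)) =ᵐ[μ]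
      {ω | X ω = a}.indicator (fun _ => g a) + {ω | X ω = c}.indicator (fun _ => g c) := by
    filter_upwards [h.ae_eq_or_eq hX hac hp0 hp1] with ω hω
    rcases hω with hω | hω <;> simp [Set.indicator, hω, hac, hac.symm]
  rw [integral_congr_ae hsplit, integral_add' ((integrable_const _).indicator hA)
    ((integrable_const _).indicator hC), integral_indicator_const _ hA,
    integral_indicator_const _ hC, measureReal_def, measureReal_def, h.1, h.2,
    ENNReal.toReal_ofReal hp0, ENNReal.toReal_ofReal (by linarith), smul_eq_mul, smul_eq_mul]

theorem memLp (h : HasTwoPointLaw μ X a c p) (hX : Measurable X) (hac : a ≠ c)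
    (hp0 : 0 ≤ p) (hp1 : p ≤ 1) (q : ENNReal) : MemLp X q μ := by
  refine MemLp.of_bound hX.aestronglyMeasurable (max |a| |c|) ?_
  filter_upwards [h.ae_eq_or_eq hX hac hp0 hp1] with ω hω
  rcases hω with hω | hω <;> simp [hω]

end HasTwoPointLaw

section

variable {Ω ι : Type*} [MeasurableSpace Ω] {μ : Measure Ω} [IsProbabilityMeasure μ]
  {ξ : ι → Ω → ℝ}

theorem memLp_const_add_sum_mul (s : Finset ι) (hξ : ∀ j, MemLp (ξ j) 2 μ) (c : ℝ)
    (x : ι → ℝ) : MemLp (fun ω => c + ∑ j ∈ s, x j * ξ j ω) 2 μ :=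
  (memLp_const c).add (memLp_finsetSum s fun j _ => (hξ j).const_mul (x j))

theorem integral_sq_const_add_sum_mul (s : Finset ι) (hξ : ∀ j, MemLp (ξ j) 2 μ)
    (hindep : Pairwise fun j k => ξ j ⟂ᵢ[μ] ξ k) (hmean : ∀ j, μ[ξ j] = 0) (c : ℝ)
    (x : ι → ℝ) :
    ∫ ω, (c + ∑ j ∈ s, x j * ξ j ω) ^ 2 ∂μ = c ^ 2 + ∑ j ∈ s, x j ^ 2 * Var[ξ j; μ] := by
  have hterm : ∀ j, MemLp (fun ω => x j * ξ j ω) 2 μ := fun j => (hξ j).const_mul (x j)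
  have hS : MemLp (fun ω => ∑ j ∈ s, x j * ξ j ω) 2 μ := memLp_finsetSum s fun j _ => hterm j
  have hmean_sum : μ[fun ω => c + ∑ j ∈ s, x j * ξ j ω] = c := by
    rw [integral_add (integrable_const c) (hS.integrable one_le_two),
      integral_finsetSum s fun j _ => (hterm j).integrable one_le_two]
    simp [integral_const_mul, hmean]
  have hvar_sum : Var[fun ω => ∑ j ∈ s, x j * ξ j ω; μ] = ∑ j ∈ s, x j ^ 2 * Var[ξ j; μ] := by
    have := IndepFun.variance_sum (s := s) (X := fun j ω => x j * ξ j ω) (fun j _ => hterm j)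
      fun j _ k _ hjk => (hindep hjk).comp (measurable_const_mul (x j))
        (measurable_const_mul (x k))
    simp only [Finset.sum_fn] at this
    rw [this]
    exact Finset.sum_congr rfl fun j _ => variance_const_mul _ _ _
  have h := variance_eq_sub (memLp_const_add_sum_mul s hξ c x)
  rw [variance_const_add hS.aestronglyMeasurable, hvar_sum, hmean_sum] at h
  simp only [Pi.pow_apply] at h
  linarith

end

/-- Inverted dropout: `1 + X` is `1 / p` on a kept unit and `0` on a dropped one. -/
def IsDropoutNoise {Ω : Type*} [MeasurableSpace Ω] (μ : Measure Ω) (X : Ω → ℝ) (p : ℝ) : Prop :=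
  HasTwoPointLaw μ X ((1 - p) / p) (-1) p

theorem one_sub_div_ne_neg_one {p : ℝ} (hp : 0 < p) : (1 - p) / p ≠ -1 := by
  intro h
  rw [div_eq_iff hp.ne'] at h
  linarith

namespace IsDropoutNoise

variable {Ω : Type*} [MeasurableSpace Ω] {μ : Measure Ω} [IsProbabilityMeasure μ]
  {X : Ω → ℝ} {p : ℝ}

theorem memLp (h : IsDropoutNoise μ X p) (hX : Measurable X) (hp : 0 < p) (hp1 : p ≤ 1)
    (q : ENNReal) : MemLp X q μ :=
  HasTwoPointLaw.memLp h hX (one_sub_div_ne_neg_one hp) hp.le hp1 q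

theorem integral_eq_zero (h : IsDropoutNoise μ X p) (hX : Measurable X) (hp : 0 < p)
    (hp1 : p ≤ 1) : μ[X] = 0 := by
  have hmean : μ[X] = p * ((1 - p) / p) + (1 - p) * (-1) :=
    HasTwoPointLaw.integral_comp h hX (one_sub_div_ne_neg_one hp) hp.le hp1 id
  rw [hmean]
  field_simp
  ring

theorem variance_eq (h : IsDropoutNoise μ X p) (hX : Measurable X) (hp : 0 < p)
    (hp1 : p ≤ 1) : Var[X; μ] = (1 - p) / p := by
  have hsq : μ[X ^ 2] = p * ((1 - p) / p) ^ 2 + (1 - p) * (-1) ^ 2 :=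
    HasTwoPointLaw.integral_comp h hX (one_sub_div_ne_neg_one hp) hp.le hp1 (· ^ 2)
  rw [variance_eq_sub (h.memLp hX hp hp1 2), h.integral_eq_zero hX hp hp1, hsq]
  field_simp
  ring

end IsDropoutNoise

/-- With dropout on the last hidden layer, the expectation over the dropout
noise of the MSE equals the noise-free MSE plus
R₁(θ) = ((1-p)/(2np)) ∑_i ∑_j (W_j f_j(x_i))². -/
theorem expectation_dropout_loss
    {Ω : Type*} [MeasurableSpace Ω] (μ : Measure Ω) [IsProbabilityMeasure μ]
    (n m : ℕ) (p : ℝ) (hp : 0 < p) (hp1 : p ≤ 1)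
    (η : Fin m → Ω → ℝ) (hmeas : ∀ j, Measurable (η j))
    (hindep : ProbabilityTheory.iIndepFun η μ)
    (hlaw1 : ∀ j, μ {ω | η j ω = (1 - p) / p} = ENNReal.ofReal p)
    (hlaw2 : ∀ j, μ {ω | η j ω = -1} = ENNReal.ofReal (1 - p))
    (W : Fin m → ℝ)       -- output weights W_j
    (f : Fin m → Fin n → ℝ)  -- hidden activations f_j(x_i)
    (b : ℝ)               -- output bias
    (y : Fin n → ℝ) :
    (∫ ω, (1 / (2 * (n : ℝ))) *
        ∑ i, (∑ j, (1 + η j ω) * (W j * f j i) + b - y i) ^ 2 ∂μ)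
      = (1 / (2 * (n : ℝ))) * ∑ i, (∑ j, W j * f j i + b - y i) ^ 2
        + ((1 - p) / (2 * (n : ℝ) * p)) * ∑ i, ∑ j, (W j * f j i) ^ 2 := by
  have hnoise : ∀ j, IsDropoutNoise μ (η j) p := fun j => ⟨hlaw1 j, hlaw2 j⟩
  have hL2 : ∀ j, MemLp (η j) 2 μ := fun j => (hnoise j).memLp (hmeas j) hp hp1 2
  set C : Fin n → ℝ := fun i => ∑ j, W j * f j i + b - y i
  have hsplit : ∀ ω i, ∑ j, (1 + η j ω) * (W j * f j i) + b - y i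
      = C i + ∑ j, W j * f j i * η j ω := by
    intro ω i
    simp only [C, add_mul, one_mul, Finset.sum_add_distrib, mul_comm (η _ ω)]
    ring
  simp only [hsplit]
  rw [integral_const_mul, integral_finsetSum _ fun i _ =>
    (memLp_const_add_sum_mul _ hL2 (C i) _).integrable_sq]
  simp only [integral_sq_const_add_sum_mul _ hL2 (fun j k => hindep.indepFun)
    (fun j => (hnoise j).integral_eq_zero (hmeas j) hp hp1),
    fun j => (hnoise j).variance_eq (hmeas j) hp hp1, ← Finset.sum_mul, Finset.sum_add_distrib]
  ring
end

section
/- Let θ_{t+1} = θ_t − ε ∇R(θ_t) be one gradient descent step for a twice continuously differentiable loss R. Then the continuous flow dθ/dt = −∇R̃(θ) with modified loss R̃(θ) = R(θ) + (ε/4)‖∇R(θ)‖² satisfies θ(ε) = θ_{t+1} + O(ε³) when started at θ(0) = θ_t. -/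
/-!
Write `g = ∇R` and `p = ¼ ∇‖∇R‖²`, so that the modified flow is `θ' = -(g + ε p)(θ)`.
Comparing `θ` on `[0, ε]` with the polynomial `x₀ - t (g + ε p)(x₀) + (t² / 2) Dg(x₀) g(x₀)` by
the mean value inequality leaves an `O(ε³)` error at `t = ε`; this only needs a second-order
Taylor bound for `g` and a first-order bound for `p` near `x₀`, together with an a priori speed
bound that keeps `θ` near `x₀`. The `ε²` terms of the polynomial cancel because
`∇‖∇R‖² = 2 D²R(∇R)` by the symmetry of the Hessian.
-/

noncomputable section

open InnerProductSpace Metric Set Filter Topology Asymptotics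
open scoped Gradient

section Gradient

variable {F : Type*} [NormedAddCommGroup F] [InnerProductSpace ℝ F] [CompleteSpace F]

theorem ContDiff.gradient {R : F → ℝ} {m n : WithTop ℕ∞} (hR : ContDiff ℝ n R)
    (hmn : m + 1 ≤ n) : ContDiff ℝ m (∇ R) :=
  (toDual ℝ F).symm.contDiff.comp (hR.fderiv_right hmn)

theorem gradient_add_const_mul {R N : F → ℝ} {x : F} (hR : DifferentiableAt ℝ R x)
    (hN : DifferentiableAt ℝ N x) (c : ℝ) :
    ∇ (fun y => R y + c * N y) x = ∇ R x + c • ∇ N x := by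
  refine HasGradientAt.gradient ?_
  rw [hasGradientAt_iff_hasFDerivAt, map_add, map_smul, toDual_gradient, toDual_gradient]
  exact hR.hasFDerivAt.add (hN.hasFDerivAt.const_mul c)

theorem inner_fderiv_gradient_apply (R : F → ℝ) (x v w : F) :
    ⟪fderiv ℝ (∇ R) x v, w⟫_ℝ = fderiv ℝ (fderiv ℝ R) x v w := by
  have : ∇ R = (toDual ℝ F).symm ∘ fderiv ℝ R := rfl
  rw [this, (toDual ℝ F).symm.comp_fderiv]
  exact toDual_symm_apply

theorem gradient_norm_sq_gradient {R : F → ℝ} {x : F} (hR : ContDiffAt ℝ 2 R x) :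
    ∇ (fun y => ‖∇ R y‖ ^ 2) x = (2 : ℝ) • fderiv ℝ (∇ R) x (∇ R x) := by
  have hgrad : DifferentiableAt ℝ (∇ R) x :=
    (toDual ℝ F).symm.differentiableAt.comp x
      ((hR.fderiv_right (m := 1) le_rfl).differentiableAt one_ne_zero)
  refine ext_inner_right ℝ fun v => ?_
  rw [inner_gradient_left, hgrad.hasFDerivAt.norm_sq.fderiv, real_inner_smul_left,
    inner_fderiv_gradient_apply, ← hR.isSymmSndFDerivAt (by simp) v,
    ← inner_fderiv_gradient_apply, real_inner_comm]
  simp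

end Gradient

section PerturbedFlow

variable {E : Type*} [NormedAddCommGroup E] [NormedSpace ℝ E]

theorem ContDiffAt.isBigO_sub_sub_fderiv {F : Type*} [NormedAddCommGroup F] [NormedSpace ℝ F]
    {g : E → F} {x₀ : E} (hg : ContDiffAt ℝ 2 g x₀) :
    (fun y => g y - g x₀ - fderiv ℝ g x₀ (y - x₀)) =O[𝓝 x₀] fun y => ‖y - x₀‖ ^ 2 := by
  obtain ⟨K, t, ht, hK⟩ := (hg.fderiv_right (m := 1) le_rfl).exists_lipschitzOnWith
  have hdiff : ∀ᶠ y in 𝓝 x₀, DifferentiableAt ℝ g y :=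
    (hg.eventually (by simp)).mono fun y hy => hy.differentiableAt two_ne_zero
  obtain ⟨δ, hδ, hball⟩ := eventually_nhds_iff_ball.1 (hdiff.and ht)
  refine IsBigO.of_bound K (eventually_nhds_iff_ball.2 ⟨δ, hδ, fun y hy => ?_⟩)
  have hsub : closedBall x₀ ‖y - x₀‖ ⊆ ball x₀ δ :=
    closedBall_subset_ball (by rwa [← dist_eq_norm, ← mem_ball])
  have hbound : ∀ z ∈ closedBall x₀ ‖y - x₀‖, ‖fderiv ℝ g z - fderiv ℝ g x₀‖ ≤ K * ‖y - x₀‖ :=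
    fun z hz => by
      rw [← dist_eq_norm]
      refine (hK.dist_le_mul z (hball z (hsub hz)).2 x₀ (mem_of_mem_nhds ht)).trans ?_
      gcongr
      exact hz
  have := (convex_closedBall x₀ ‖y - x₀‖).norm_image_sub_le_of_norm_fderiv_le'
    (fun z hz => (hball z (hsub hz)).1) hbound (mem_closedBall_self (norm_nonneg _))
    (mem_closedBall.2 (dist_eq_norm y x₀).le)
  simpa [pow_two, mul_assoc] using this

theorem norm_image_sub_le_of_norm_deriv_lt_of_norm_sub_le {f f' : ℝ → E} {T r V : ℝ}
    (hf : ∀ t ∈ Icc 0 T, HasDerivAt f (f' t) t) (hV : 0 ≤ V) (hVT : V * T ≤ r)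
    (bound : ∀ t ∈ Ico 0 T, ‖f t - f 0‖ ≤ r → ‖f' t‖ < V) :
    ∀ t ∈ Icc 0 T, ‖f t - f 0‖ ≤ V * t := by
  refine image_norm_le_of_norm_deriv_right_lt_deriv_boundary (f := fun t => f t - f 0)
    (fun t ht => (hf t ht).continuousAt.continuousWithinAt.sub continuousWithinAt_const)
    (fun t ht => ((hf t (Ico_subset_Icc_self ht)).sub_const (f 0)).hasDerivWithinAt)
    (by simp) (fun t => (hasDerivAt_id t).const_mul V) fun t ht heq => ?_
  simp only [mul_one]
  exact bound t ht (heq.le.trans ((mul_le_mul_of_nonneg_left ht.2.le hV).trans hVT))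

theorem norm_sub_le_of_norm_deriv_sub_le {f φ f' φ' : ℝ → E} {T K : ℝ}
    (hf : ∀ t ∈ Icc 0 T, HasDerivAt f (f' t) t) (hφ : ∀ t ∈ Icc 0 T, HasDerivAt φ (φ' t) t)
    (h₀ : f 0 = φ 0) (bound : ∀ t ∈ Ico 0 T, ‖f' t - φ' t‖ ≤ K) :
    ∀ t ∈ Icc 0 T, ‖f t - φ t‖ ≤ K * t := by
  intro t ht
  simpa [h₀] using norm_image_sub_le_of_norm_deriv_le_segment' (f := f - φ)
    (fun s hs => ((hf s hs).sub (hφ s hs)).hasDerivWithinAt) bound t ht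

structure PerturbedFieldBounds (g p : E → E) (H : E →L[ℝ] E) (x₀ : E) (r K : ℝ) : Prop where
  radius_le_one : r ≤ 1
  norm_H_le : ‖H‖ ≤ K
  norm_g_le : ‖g x₀‖ ≤ K
  norm_p_le : ‖p x₀‖ ≤ K
  taylor : ∀ y ∈ closedBall x₀ r, ‖g y - g x₀ - H (y - x₀)‖ ≤ K * ‖y - x₀‖ ^ 2
  lipschitz : ∀ y ∈ closedBall x₀ r, ‖p y - p x₀‖ ≤ K * ‖y - x₀‖

namespace PerturbedFieldBounds

variable {g p : E → E} {H : E →L[ℝ] E} {x₀ y : E} {r K ε : ℝ}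

theorem nonneg (h : PerturbedFieldBounds g p H x₀ r K) : 0 ≤ K :=
  (norm_nonneg _).trans h.norm_H_le

theorem norm_sub_le (h : PerturbedFieldBounds g p H x₀ r K) (hy : y ∈ closedBall x₀ r) :
    ‖g y - g x₀‖ ≤ 2 * K * ‖y - x₀‖ := by
  have hd : ‖y - x₀‖ ≤ 1 := (mem_closedBall_iff_norm.1 hy).trans h.radius_le_one
  calc ‖g y - g x₀‖ = ‖(g y - g x₀ - H (y - x₀)) + H (y - x₀)‖ := by rw [sub_add_cancel]
    _ ≤ K * ‖y - x₀‖ ^ 2 + ‖H‖ * ‖y - x₀‖ :=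
      norm_add_le_of_le (h.taylor y hy) (H.le_opNorm _)
    _ ≤ 2 * K * ‖y - x₀‖ := by
      nlinarith [h.norm_H_le, h.nonneg, norm_nonneg (y - x₀),
        mul_le_mul_of_nonneg_left hd h.nonneg]

theorem norm_field_sub_le (h : PerturbedFieldBounds g p H x₀ r K) (hy : y ∈ closedBall x₀ r)
    (hε : 0 ≤ ε) : ‖g y + ε • p y - g x₀‖ ≤ 2 * K * (‖y - x₀‖ + ε) := by
  have hd : ‖y - x₀‖ ≤ 1 := (mem_closedBall_iff_norm.1 hy).trans h.radius_le_one
  have hp : ‖p y‖ ≤ 2 * K := calc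
    ‖p y‖ = ‖(p y - p x₀) + p x₀‖ := by rw [sub_add_cancel]
    _ ≤ K * ‖y - x₀‖ + K := norm_add_le_of_le (h.lipschitz y hy) h.norm_p_le
    _ ≤ 2 * K := by nlinarith [h.nonneg]
  calc ‖g y + ε • p y - g x₀‖ = ‖(g y - g x₀) + ε • p y‖ := by rw [sub_add_eq_add_sub]
    _ ≤ 2 * K * ‖y - x₀‖ + ε * (2 * K) := by
      refine norm_add_le_of_le (h.norm_sub_le hy) ?_
      rw [norm_smul, Real.norm_of_nonneg hε]
      exact mul_le_mul_of_nonneg_left hp hε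
    _ = 2 * K * (‖y - x₀‖ + ε) := by ring

theorem norm_field_le (h : PerturbedFieldBounds g p H x₀ r K) (hy : y ∈ closedBall x₀ r)
    (hε : 0 ≤ ε) (hε₁ : ε ≤ 1) : ‖g y + ε • p y‖ ≤ 5 * K := by
  have hd : ‖y - x₀‖ ≤ 1 := (mem_closedBall_iff_norm.1 hy).trans h.radius_le_one
  calc ‖g y + ε • p y‖ = ‖(g y + ε • p y - g x₀) + g x₀‖ := by rw [sub_add_cancel]
    _ ≤ 2 * K * (‖y - x₀‖ + ε) + K := norm_add_le_of_le (h.norm_field_sub_le hy hε) h.norm_g_le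
    _ ≤ 5 * K := by nlinarith [h.nonneg]

theorem norm_field_sub_taylor_le (h : PerturbedFieldBounds g p H x₀ r K)
    (hy : y ∈ closedBall x₀ r) (hε : 0 ≤ ε) (t : ℝ) :
    ‖g y + ε • p y - (g x₀ + ε • p x₀ - t • H (g x₀))‖ ≤
      K * (‖y - x₀‖ ^ 2 + ‖y - (x₀ - t • g x₀)‖ + ε * ‖y - x₀‖) := by
  have hsplit : g y + ε • p y - (g x₀ + ε • p x₀ - t • H (g x₀)) =
      (g y - g x₀ - H (y - x₀)) + H (y - (x₀ - t • g x₀)) + ε • (p y - p x₀) := by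
    simp only [map_sub, map_smul, smul_sub]
    abel
  rw [hsplit]
  have hH : ‖H (y - (x₀ - t • g x₀))‖ ≤ K * ‖y - (x₀ - t • g x₀)‖ :=
    (H.le_opNorm _).trans (mul_le_mul_of_nonneg_right h.norm_H_le (norm_nonneg _))
  have hp : ‖ε • (p y - p x₀)‖ ≤ K * (ε * ‖y - x₀‖) := by
    rw [norm_smul, Real.norm_of_nonneg hε, mul_left_comm]
    exact mul_le_mul_of_nonneg_left (h.lipschitz y hy) hε
  linarith [norm_add₃_le (a := g y - g x₀ - H (y - x₀)) (b := H (y - (x₀ - t • g x₀)))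
    (c := ε • (p y - p x₀)), h.taylor y hy]

theorem norm_flow_sub_le (h : PerturbedFieldBounds g p H x₀ r K) {θ : ℝ → E} (hε : 0 ≤ ε)
    (hεr : (5 * K + 1) * ε ≤ r) (hθ₀ : θ 0 = x₀)
    (hθ : ∀ t ∈ Icc 0 ε, HasDerivAt θ (-(g (θ t) + ε • p (θ t))) t) :
    ‖θ ε - (x₀ - ε • (g x₀ + ε • p x₀) + (ε ^ 2 / 2) • H (g x₀))‖ ≤
      K * ((5 * K + 1) ^ 2 + 2 * K * (5 * K + 2) + (5 * K + 1)) * ε ^ 3 := by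
  set V := 5 * K + 1
  have hK := h.nonneg
  have hV : 0 ≤ V := by positivity
  have hε₁ : ε ≤ 1 := by nlinarith [h.radius_le_one]
  have hspeed : ∀ t ∈ Icc 0 ε, ‖θ t - x₀‖ ≤ V * t := by
    simpa only [hθ₀] using norm_image_sub_le_of_norm_deriv_lt_of_norm_sub_le hθ hV hεr
      fun t _ ht => by
        rw [norm_neg]
        linarith [h.norm_field_le (mem_closedBall_iff_norm.2 (hθ₀ ▸ ht)) hε hε₁]
  have hnear : ∀ t ∈ Icc 0 ε, ‖θ t - x₀‖ ≤ V * ε := fun t ht =>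
    (hspeed t ht).trans (mul_le_mul_of_nonneg_left ht.2 hV)
  have hball : ∀ t ∈ Icc 0 ε, θ t ∈ closedBall x₀ r := fun t ht =>
    mem_closedBall_iff_norm.2 ((hnear t ht).trans hεr)
  have hfirst : ∀ t ∈ Icc 0 ε, ‖θ t - (x₀ - t • g x₀)‖ ≤ 2 * K * (V + 1) * ε * t := by
    refine norm_sub_le_of_norm_deriv_sub_le hθ
      (fun t _ => ((hasDerivAt_id t).smul_const (g x₀)).const_sub x₀) (by simp [hθ₀])
      fun t ht => ?_
    have ht' := Ico_subset_Icc_self ht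
    rw [one_smul, neg_sub_neg, norm_sub_rev,
      show 2 * K * (V + 1) * ε = 2 * K * (V * ε + ε) by ring]
    refine (h.norm_field_sub_le (hball t ht') hε).trans ?_
    gcongr
    exact hnear t ht'
  have hφ : ∀ t ∈ Icc 0 ε, HasDerivAt
      (fun s => x₀ - s • (g x₀ + ε • p x₀) + (s ^ 2 / 2) • H (g x₀))
      (-(g x₀ + ε • p x₀ - t • H (g x₀))) t := by
    intro t _
    convert (((hasDerivAt_id t).smul_const (g x₀ + ε • p x₀)).const_sub x₀).add
      (((hasDerivAt_pow 2 t).div_const 2).smul_const (H (g x₀))) using 1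
    · rfl
    · norm_num
      module
  have hsecond := norm_sub_le_of_norm_deriv_sub_le hθ hφ (by simp [hθ₀])
    (K := K * (V ^ 2 + 2 * K * (V + 1) + V) * ε ^ 2) fun t ht => by
      have ht' := Ico_subset_Icc_self ht
      rw [neg_sub_neg, norm_sub_rev, mul_assoc]
      refine (h.norm_field_sub_taylor_le (hball t ht') hε t).trans
        (mul_le_mul_of_nonneg_left ?_ hK)
      have hd₂ : ‖θ t - x₀‖ ^ 2 ≤ (V * ε) ^ 2 := by
        gcongr
        exact hnear t ht'
      have he : ‖θ t - (x₀ - t • g x₀)‖ ≤ 2 * K * (V + 1) * ε * ε :=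
        (hfirst t ht').trans (by gcongr; exact ht.2.le)
      have hd : ε * ‖θ t - x₀‖ ≤ ε * (V * ε) := mul_le_mul_of_nonneg_left (hnear t ht') hε
      linarith
  calc _ ≤ K * (V ^ 2 + 2 * K * (V + 1) + V) * ε ^ 2 * ε := hsecond ε (right_mem_Icc.2 hε)
    _ = _ := by ring

theorem exists_of_isBigO
    (hg : (fun y => g y - g x₀ - H (y - x₀)) =O[𝓝 x₀] fun y => ‖y - x₀‖ ^ 2)
    (hp : (fun y => p y - p x₀) =O[𝓝 x₀] fun y => y - x₀) :
    ∃ r > 0, ∃ K, PerturbedFieldBounds g p H x₀ r K := by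
  obtain ⟨c₁, hc₁⟩ := hg.bound
  obtain ⟨c₂, hc₂⟩ := hp.bound
  obtain ⟨δ, hδ, hball⟩ := eventually_nhds_iff_ball.1 (hc₁.and hc₂)
  have hsub : closedBall x₀ (min (δ / 2) 1) ⊆ ball x₀ δ :=
    closedBall_subset_ball ((min_le_left _ _).trans_lt (half_lt_self hδ))
  set K := max (max c₁ c₂) (max ‖H‖ (max ‖g x₀‖ ‖p x₀‖))
  refine ⟨min (δ / 2) 1, by positivity, K, min_le_right _ _, by simp [K], by simp [K],
    by simp [K], fun y hy => ?_, fun y hy => ?_⟩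
  · refine (hball y (hsub hy)).1.trans ?_
    rw [norm_pow, norm_norm]
    exact mul_le_mul_of_nonneg_right (by simp [K]) (by positivity)
  · exact (hball y (hsub hy)).2.trans (mul_le_mul_of_nonneg_right (by simp [K]) (norm_nonneg _))

end PerturbedFieldBounds

theorem exists_norm_perturbed_flow_sub_le {g p : E → E} {H : E →L[ℝ] E} {x₀ : E}
    (hg : (fun y => g y - g x₀ - H (y - x₀)) =O[𝓝 x₀] fun y => ‖y - x₀‖ ^ 2)
    (hp : (fun y => p y - p x₀) =O[𝓝 x₀] fun y => y - x₀) :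
    ∃ C > (0 : ℝ), ∃ ε₀ > (0 : ℝ), ∀ ε ∈ Ioo 0 ε₀, ∀ θ : ℝ → E, θ 0 = x₀ →
      (∀ t ∈ Icc 0 ε, HasDerivAt θ (-(g (θ t) + ε • p (θ t))) t) →
      ‖θ ε - (x₀ - ε • (g x₀ + ε • p x₀) + (ε ^ 2 / 2) • H (g x₀))‖ ≤ C * ε ^ 3 := by
  obtain ⟨r, hr, K, h⟩ := PerturbedFieldBounds.exists_of_isBigO hg hp
  have hK := h.nonneg
  refine ⟨K * ((5 * K + 1) ^ 2 + 2 * K * (5 * K + 2) + (5 * K + 1)) + 1, by positivity,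
    r / (5 * K + 1), by positivity, fun ε hε θ hθ₀ hθ => ?_⟩
  have hεr : (5 * K + 1) * ε ≤ r := by
    linarith [(lt_div_iff₀ (by positivity)).1 hε.2]
  refine (h.norm_flow_sub_le hε.1.le hεr hθ₀ hθ).trans ?_
  exact mul_le_mul_of_nonneg_right (by linarith) (pow_nonneg hε.1.le 3)

end PerturbedFlow

/-- one gradient descent step θ_{t+1} = θ_t − ε∇R(θ_t) is approximated to
O(ε³) by the time-ε flow of the modified loss R̃(θ) = R(θ) + (ε/4)‖∇R(θ)‖². -/
theorem modified_gradient_flow_matches_GD_step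
    (M : ℕ) (R : EuclideanSpace ℝ (Fin M) → ℝ) (hR : ContDiff ℝ 3 R)
    (θt : EuclideanSpace ℝ (Fin M)) :
    ∃ C > (0 : ℝ), ∃ ε₀ > (0 : ℝ), ∀ ε : ℝ, ε ∈ Set.Ioo 0 ε₀ →
      ∀ θ : ℝ → EuclideanSpace ℝ (Fin M), θ 0 = θt →
        (∀ t ∈ Set.Icc (0 : ℝ) ε, HasDerivAt θ
            (-(gradient (fun ϑ => R ϑ + (ε / 4) * ‖gradient R ϑ‖ ^ 2) (θ t))) t) →
        ‖θ ε - (θt - ε • gradient R θt)‖ ≤ C * ε ^ 3 := by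
  have hg : ContDiff ℝ 2 (∇ R) := hR.gradient (by norm_num)
  have hn : ContDiff ℝ 2 fun y => ‖∇ R y‖ ^ 2 := hg.norm_sq (𝕜 := ℝ)
  set p := (4 : ℝ)⁻¹ • ∇ fun y => ‖∇ R y‖ ^ 2 with hp_def
  have hfield : ∀ ε y, ∇ (fun ϑ => R ϑ + (ε / 4) * ‖∇ R ϑ‖ ^ 2) y = ∇ R y + ε • p y :=
    fun ε y => by
      rw [gradient_add_const_mul (hR.differentiable (by norm_num) y)
        (hn.differentiable (by norm_num) y), hp_def, Pi.smul_apply, smul_smul, div_eq_mul_inv]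
  have hp : p θt = (2 : ℝ)⁻¹ • fderiv ℝ (∇ R) θt (∇ R θt) := by
    rw [hp_def, Pi.smul_apply, gradient_norm_sq_gradient (hR.contDiffAt.of_le (by norm_num)),
      smul_smul]
    norm_num
  have hp_diff : DifferentiableAt ℝ p θt :=
    ((hn.gradient (m := 1) (by norm_num)).differentiable one_ne_zero θt).const_smul _
  obtain ⟨C, hC, ε₀, hε₀, hflow⟩ :=
    exists_norm_perturbed_flow_sub_le hg.contDiffAt.isBigO_sub_sub_fderiv hp_diff.isBigO_sub
  refine ⟨C, hC, ε₀, hε₀, fun ε hε θ hθ₀ hθ => ?_⟩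
  have hexpansion : θt - ε • (∇ R θt + ε • p θt) + (ε ^ 2 / 2) • fderiv ℝ (∇ R) θt (∇ R θt) =
      θt - ε • ∇ R θt := by
    rw [hp]
    module
  simpa only [hexpansion] using hflow ε hε θ hθ₀ (by simpa only [hfield] using hθ)

end
end
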